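/- Let φ : F(c₁,c₂) → F(c₁,c₂) be the endomorphism of the free group F(c₁,c₂) determined by cᵢ ↦ Cᵢ for i = 1,2, and let π : F(c₁,c₂) → G be the homomorphism sending c₁, c₂ to the generators c₁, c₂ of G. Then for every integer r ≥ 1 and every integer n ≥ 1, the identity abⁿ = bⁿ⁻¹ab · π(φ(C))·π(φ²(C))⋯π(φⁿ⁻¹(C)) holds in G (for n = 1 the product on the right is empty). -/
import Mathlib


/-- The "progression word" `x y^(s+1) x y^(s+2) ⋯ x y^(s+r)` in a group. -/
def wordProg {G : Type*} [Group G] (x y : G) (s r : ℕ) : G :=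
  ((List.range r).map (fun k => x * y ^ (s + k + 1))).prod

/-- Generators of `G`: `0 = a`, `1 = b`, `2 = c₁`, `3 = c₂`, `4 = d₁`, `5 = d₂`.
The relators are `a⁻¹b⁻¹ab C⁻¹`, `b⁻¹cᵢb Cᵢ⁻¹`, `(ab)⁻¹d_j(ab) D_j⁻¹`, and
`cᵢ⁻¹d_jcᵢ D_{ij}⁻¹` for `1 ≤ i,j ≤ 2`, where `C = (c₁c₂)(c₁c₂²)⋯(c₁c₂^r)`,
`Cᵢ = (c₁c₂^{ri+1})⋯(c₁c₂^{ri+r})`, `D_j = (d₁d₂^{rj+1})⋯(d₁d₂^{rj+r})`, and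
`D_{ij} = (d₁d₂^{r(2i+j)+1})⋯(d₁d₂^{r(2i+j)+r})`. -/
def GRels (r : ℕ) : Set (FreeGroup (Fin 6)) :=
  { w | (w = (FreeGroup.of (0 : Fin 6))⁻¹ * (FreeGroup.of (1 : Fin 6))⁻¹ *
            FreeGroup.of (0 : Fin 6) * FreeGroup.of (1 : Fin 6) *
            (wordProg (FreeGroup.of (2 : Fin 6)) (FreeGroup.of (3 : Fin 6)) 0 r)⁻¹) ∨
        (∃ i : Fin 2,
          w = (FreeGroup.of (1 : Fin 6))⁻¹ *
              FreeGroup.of (⟨i.val + 2, by omega⟩ : Fin 6) *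
              FreeGroup.of (1 : Fin 6) *
              (wordProg (FreeGroup.of (2 : Fin 6)) (FreeGroup.of (3 : Fin 6))
                (r * (i.val + 1)) r)⁻¹) ∨
        (∃ j : Fin 2,
          w = (FreeGroup.of (0 : Fin 6) * FreeGroup.of (1 : Fin 6))⁻¹ *
              FreeGroup.of (⟨j.val + 4, by omega⟩ : Fin 6) *
              (FreeGroup.of (0 : Fin 6) * FreeGroup.of (1 : Fin 6)) *
              (wordProg (FreeGroup.of (4 : Fin 6)) (FreeGroup.of (5 : Fin 6))
                (r * (j.val + 1)) r)⁻¹) ∨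
        (∃ i j : Fin 2,
          w = (FreeGroup.of (⟨i.val + 2, by omega⟩ : Fin 6))⁻¹ *
              FreeGroup.of (⟨j.val + 4, by omega⟩ : Fin 6) *
              FreeGroup.of (⟨i.val + 2, by omega⟩ : Fin 6) *
              (wordProg (FreeGroup.of (4 : Fin 6)) (FreeGroup.of (5 : Fin 6))
                (r * (2 * (i.val + 1) + (j.val + 1))) r)⁻¹) }

/-- `G = ⟨a,b,c₁,c₂,d₁,d₂ ∣ a⁻¹b⁻¹ab = C, b⁻¹cᵢb = Cᵢ, (ab)⁻¹d_j(ab) = D_j,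
cᵢ⁻¹d_jcᵢ = D_{ij}, 1 ≤ i,j ≤ 2⟩`. -/
abbrev GG (r : ℕ) := PresentedGroup (GRels r)

lemma map_wordProg {G H : Type*} [Group G] [Group H] (f : G →* H) (x y : G) (s r : ℕ) :
    f (wordProg x y s r) = wordProg (f x) (f y) s r := by
  simp [wordProg, map_list_prod, List.map_map, Function.comp_def, map_mul, map_pow]

lemma prod_mul_comm' {H : Type*} [Group H] (B : H) (l : List H) :
    l.prod * B = B * (l.map (fun x => B⁻¹ * x * B)).prod := by
  induction l with
  | nil => simp
  | cons x t ih =>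
    rw [List.prod_cons, mul_assoc, ih, List.map_cons, List.prod_cons]
    group

lemma key_formula {H : Type*} [Group H] (A B : H) (π : FreeGroup (Fin 2) →* H)
    (φ : FreeGroup (Fin 2) →* FreeGroup (Fin 2)) (C : FreeGroup (Fin 2))
    (h1 : A * B = B * A * π C)
    (h2 : ∀ w, π (φ w) = B⁻¹ * π w * B) (m : ℕ) :
    A * B ^ (m + 1) = B ^ m * A * B *
      ((List.range m).map (fun k => π ((⇑φ)^[k + 1] C))).prod := by
  induction m with
  | zero => simp
  | succ m ih =>
    set P := ((List.range m).map (fun k => π ((⇑φ)^[k + 1] C))).prod with hP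
    set Q := ((List.range m).map (fun k => π ((⇑φ)^[k + 2] C))).prod with hQdef
    have hQ : P * B = B * Q := by
      have hfun : ((fun x => B⁻¹ * x * B) ∘ fun k => π ((⇑φ)^[k + 1] C))
          = fun k => π ((⇑φ)^[k + 2] C) := by
        funext k
        simp only [Function.comp_apply, ← h2, Function.iterate_succ_apply']
      rw [hP, prod_mul_comm' B, List.map_map, hfun, hQdef]
    have hC : π C * B = B * π (φ C) := by rw [h2]; group
    have hkey : A * B * B = B * A * B * π (φ C) := by
      rw [h1, mul_assoc (B * A), hC, ← mul_assoc]
    have hrange : ((List.range (m + 1)).map (fun k => π ((⇑φ)^[k + 1] C))).prod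
        = π (φ C) * Q := by
      rw [List.range_succ_eq_map, List.map_cons, List.prod_cons, List.map_map, hQdef]
      congr 1
    rw [hrange]
    calc A * B ^ (m + 1 + 1)
        = A * B ^ (m + 1) * B := by rw [pow_succ, mul_assoc]
      _ = B ^ m * A * B * P * B := by rw [ih]
      _ = B ^ m * A * B * (P * B) := by rw [mul_assoc]
      _ = B ^ m * A * B * (B * Q) := by rw [hQ]
      _ = B ^ m * (A * B * B) * Q := by simp only [mul_assoc]
      _ = B ^ m * (B * A * B * π (φ C)) * Q := by rw [hkey]
      _ = B ^ (m + 1) * A * B * (π (φ C) * Q) := by rw [pow_succ]; simp only [mul_assoc]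

def piMap (r : ℕ) : FreeGroup (Fin 2) →* GG r :=
  FreeGroup.lift (fun i : Fin 2 => (PresentedGroup.of (⟨i.val + 2, by omega⟩ : Fin 6) : GG r))

def phiMap (r : ℕ) : FreeGroup (Fin 2) →* FreeGroup (Fin 2) :=
  FreeGroup.lift (fun i : Fin 2 =>
    wordProg (FreeGroup.of (0 : Fin 2)) (FreeGroup.of (1 : Fin 2)) (r * (i.val + 1)) r)

lemma rel_one (r : ℕ) {w : FreeGroup (Fin 6)} (hw : w ∈ GRels r) :
    PresentedGroup.mk (GRels r) w = 1 :=
  (QuotientGroup.eq_one_iff w).2 (Subgroup.subset_normalClosure hw)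

lemma pi_wordProg (r s t : ℕ) :
    piMap r (wordProg (FreeGroup.of (0 : Fin 2)) (FreeGroup.of (1 : Fin 2)) s t) =
    PresentedGroup.mk (GRels r)
      (wordProg (FreeGroup.of (2 : Fin 6)) (FreeGroup.of (3 : Fin 6)) s t) := by
  rw [map_wordProg, map_wordProg]
  rfl

lemma h1_lemma (r : ℕ) :
    (PresentedGroup.of (0 : Fin 6) : GG r) * PresentedGroup.of (1 : Fin 6) =
    PresentedGroup.of (1 : Fin 6) * PresentedGroup.of (0 : Fin 6) *
      piMap r (wordProg (FreeGroup.of (0 : Fin 2)) (FreeGroup.of (1 : Fin 2)) 0 r) := by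
  have h := rel_one r (Or.inl rfl : _ ∈ GRels r)
  simp only [map_mul, map_inv] at h
  have h' := mul_inv_eq_one.mp h
  rw [pi_wordProg, ← h']
  show _ = _ * _ * ((PresentedGroup.of (0 : Fin 6) : GG r)⁻¹ * (PresentedGroup.of 1)⁻¹ *
    PresentedGroup.of 0 * PresentedGroup.of 1)
  group

lemma h2_lemma (r : ℕ) (w : FreeGroup (Fin 2)) :
    piMap r (phiMap r w) =
    (PresentedGroup.of (1 : Fin 6) : GG r)⁻¹ * piMap r w * PresentedGroup.of (1 : Fin 6) := by
  have key : (piMap r).comp (phiMap r) =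
      (MulAut.conj ((PresentedGroup.of (1 : Fin 6) : GG r))⁻¹).toMonoidHom.comp (piMap r) := by
    apply FreeGroup.ext_hom
    intro i
    have h := rel_one r (Or.inr (Or.inl ⟨i, rfl⟩) : _ ∈ GRels r)
    simp only [map_mul, map_inv] at h
    have h' := mul_inv_eq_one.mp h
    simp only [MonoidHom.comp_apply, MulEquiv.coe_toMonoidHom, MulAut.conj_apply, inv_inv]
    show piMap r (phiMap r (FreeGroup.of i)) = _
    rw [phiMap, FreeGroup.lift_apply_of, pi_wordProg, ← h']
    show _ = (PresentedGroup.of (1 : Fin 6) : GG r)⁻¹ * piMap r (FreeGroup.of i) *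
      PresentedGroup.of (1 : Fin 6)
    rw [piMap, FreeGroup.lift_apply_of]
    rfl
  exact DFunLike.congr_fun key w


/-- Let `φ : F(c₁,c₂) → F(c₁,c₂)` be the endomorphism `cᵢ ↦ Cᵢ` and
`π : F(c₁,c₂) → G` the homomorphism sending `c₁, c₂` to the generators `c₁, c₂`
of `G`.  For every `r ≥ 1` and `n ≥ 1`,
`abⁿ = bⁿ⁻¹ab · π(φ(C))·π(φ²(C))⋯π(φⁿ⁻¹(C))` holds in `G`
(for `n = 1` the product on the right is empty). -/
theorem ab_pow_formula (r : ℕ) (hr : 1 ≤ r) (n : ℕ) (hn : 1 ≤ n) :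
    (PresentedGroup.of (0 : Fin 6) : GG r) * PresentedGroup.of (1 : Fin 6) ^ n =
    (PresentedGroup.of (1 : Fin 6) : GG r) ^ (n - 1) * PresentedGroup.of (0 : Fin 6) *
      PresentedGroup.of (1 : Fin 6) *
      ((List.range (n - 1)).map (fun k =>
        (FreeGroup.lift (fun i : Fin 2 =>
            (PresentedGroup.of (⟨i.val + 2, by omega⟩ : Fin 6) : GG r)))
          ((⇑(FreeGroup.lift (fun i : Fin 2 =>
              wordProg (FreeGroup.of (0 : Fin 2)) (FreeGroup.of (1 : Fin 2))
                (r * (i.val + 1)) r)))^[k + 1]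
            (wordProg (FreeGroup.of (0 : Fin 2)) (FreeGroup.of (1 : Fin 2)) 0 r)))).prod := by
  obtain ⟨m, rfl⟩ : ∃ m, n = m + 1 := ⟨n - 1, by omega⟩
  simp only [Nat.add_sub_cancel]
  exact key_formula (PresentedGroup.of 0) (PresentedGroup.of 1) (piMap r) (phiMap r)
    (wordProg (FreeGroup.of (0 : Fin 2)) (FreeGroup.of (1 : Fin 2)) 0 r)
    (h1_lemma r) (h2_lemma r) m
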